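/- arXiv:math/0309072 — 7 statements merged into one kernel-verified Lean document; each statement's English description precedes it below -/
import Mathlib

section
/- If (x,y,z) ∈ ℝ³ satisfies z < -2 and -xy - z < -2, then xy > 4 and x² + y² < -κ(x,y,z) - 6, where κ(x,y,z) = -x² - y² + z² + xyz - 2. -/
def κ (x y z : ℝ) : ℝ := -x^2 - y^2 + z^2 + x*y*z - 2

theorem stmt0 (x y z : ℝ) (hz : z < -2) (hzbar : -x*y - z < -2) :
    x*y > 4 ∧ x^2 + y^2 < -κ x y z - 6 := by
  constructor
  · nlinarith
  · simp only [κ]; nlinarith [mul_pos (show (0:ℝ) < -z by linarith) (show (0:ℝ) < x*y - 2 + z by linarith)]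
end

section
/- If (x,y,z) ∈ ℝ³ satisfies z < -2 and -xy - z < -2, then κ(x,y,z) < -14, where κ(x,y,z) = -x² - y² + z² + xyz - 2. -/
theorem stmt1 (x y z : ℝ) (hz : z < -2) (hzbar : -x*y - z < -2) :
    κ x y z < -14 := by
  unfold κ
  nlinarith [sq_nonneg (x-y), sq_nonneg (x+y), mul_pos (show (0:ℝ) < x*y - (2-z) by linarith) (show (0:ℝ) < -z by linarith)]
end

section
/- For every real c < -14, there exists (x,y,z) ∈ ℝ³ with z < -2, -xy - z < -2, and κ(x,y,z) = c. Hence Ω₀ᴹ ∩ κ⁻¹(c) ≠ ∅ if and only if c < -14. -/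
theorem stmt2 (c : ℝ) :
    (∃ x y z : ℝ, z < -2 ∧ -x*y - z < -2 ∧ κ x y z = c) ↔ c < -14 := by
  constructor
  · rintro ⟨x, y, z, h1, h2, h3⟩
    simp only [κ] at h3
    nlinarith [sq_nonneg (x - y),
      mul_pos (by nlinarith : (0:ℝ) < x*y - (2 - z)) (by nlinarith : (0:ℝ) < 2 - z)]
  · intro hc
    set z : ℝ := (c - 2)/8 with hz
    have hz2 : z < -2 := by rw [hz]; linarith
    have hzd : z - 2 < 0 := by linarith
    have hnum : c + 2 - z^2 < 0 := by nlinarith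
    set s : ℝ := (c + 2 - z^2)/(z - 2) with hs
    have hspos : 0 < s := div_pos_of_neg_of_neg hnum hzd
    have hsgt : 2 - z < s := by
      rw [hs, lt_div_iff_of_neg hzd]
      nlinarith
    refine ⟨Real.sqrt s, Real.sqrt s, z, hz2, ?_, ?_⟩
    · have hq : Real.sqrt s * Real.sqrt s = s := Real.mul_self_sqrt hspos.le
      nlinarith
    · have hq : Real.sqrt s * Real.sqrt s = s := Real.mul_self_sqrt hspos.le
      simp only [κ]
      have hseq : s * (z - 2) = c + 2 - z^2 := div_mul_cancel₀ _ (by linarith)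
      nlinarith [hq]
end

section
/- Let u = (x,y,z) ∈ ℝ³ with z < -2, z̄ := -xy - z < -2, and κ(x,y,z) = c. Define τ(x,y,z) = -z·(-xy - z). Then the z̄-coordinate of Q_x(u) = (yz - x, y, z), namely -y(yz - x) - z, is strictly positive; consequently τ(Q_x(u)) > 0 > τ(u). -/
def τ (x y z : ℝ) : ℝ := z * (x*y + z)

theorem stmt6 (x y z c : ℝ) (hz : z < -2) (hzbar : -x*y - z < -2)
    (hk : κ x y z = c) :
    -y*(y*z - x) - z > 0 ∧ τ (y*z - x) y z > 0 ∧ 0 > τ x y z := by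
  refine ⟨?_, ?_, ?_⟩ <;> (try simp only [τ]) <;>
    nlinarith [sq_nonneg y, mul_nonneg (sq_nonneg y) (by linarith : (0:ℝ) ≤ -z)]
end

section
/- Let u = (x,y,z) ∈ ℝ³ with z < -2 and -xy - z < -2, and set τ(x,y,z) = z(xy + z). Then the point Q_y(u) = (x, xz - y, z) satisfies -x(xz - y) - z > 6; in particular τ(Q_y(u)) > 0 > τ(u). -/
theorem stmt7 (x y z : ℝ) (hz : z < -2) (hzbar : -x*y - z < -2) :
    -x*(x*z - y) - z > 6 ∧ τ x (x*z - y) z > 0 ∧ 0 > τ x y z := by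
  have h1 : -x*(x*z - y) - z > 6 := by nlinarith [sq_nonneg x, mul_nonneg (sq_nonneg x) (by linarith : (0:ℝ) ≤ -z)]
  refine ⟨h1, ?_, ?_⟩ <;> unfold τ
  · nlinarith
  · nlinarith
end

section
/- Suppose (x,y,z) ∈ ℝ³ with z < -2, -xy - z < -2 and κ(x,y,z) = c. Then |x| > 4/√(-c-6) and |y| > 4/√(-c-6), and also |x| < √(-c-6) and |y| < √(-c-6). -/
theorem stmt8 (x y z c : ℝ) (hz : z < -2) (hzbar : -x*y - z < -2)
    (hk : κ x y z = c) :
    |x| > 4 / Real.sqrt (-c - 6) ∧ |y| > 4 / Real.sqrt (-c - 6) ∧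
    |x| < Real.sqrt (-c - 6) ∧ |y| < Real.sqrt (-c - 6) := by
  have hxy : x * y > 4 := by linarith
  have hkk : -x^2 - y^2 + z^2 + x*y*z - 2 = c := hk
  have key : -z * (x*y + z) > 4 := by nlinarith
  have h1 : x^2 < -c - 6 := by nlinarith [sq_nonneg y]
  have h2 : y^2 < -c - 6 := by nlinarith [sq_nonneg x]
  have hs0 : (0:ℝ) < -c - 6 := by nlinarith [sq_nonneg x]
  have hxs : |x| < Real.sqrt (-c - 6) := by
    rw [show |x| = Real.sqrt (x^2) by rw [Real.sqrt_sq_eq_abs]]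
    exact Real.sqrt_lt_sqrt (sq_nonneg x) h1
  have hys : |y| < Real.sqrt (-c - 6) := by
    rw [show |y| = Real.sqrt (y^2) by rw [Real.sqrt_sq_eq_abs]]
    exact Real.sqrt_lt_sqrt (sq_nonneg y) h2
  have hsq : (0:ℝ) < Real.sqrt (-c - 6) := Real.sqrt_pos.mpr hs0
  have hx0 : (0:ℝ) < |x| := by
    rcases eq_or_ne x 0 with h | h
    · subst h; simp at hxy; linarith
    · exact abs_pos.mpr h
  have hy0 : (0:ℝ) < |y| := by
    rcases eq_or_ne y 0 with h | h
    · subst h; simp at hxy; linarith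
    · exact abs_pos.mpr h
  refine ⟨?_, ?_, hxs, hys⟩
  · rw [gt_iff_lt, div_lt_iff₀ hsq]
    calc (4:ℝ) < x * y := hxy
      _ ≤ |x| * |y| := by rw [← abs_mul]; exact le_abs_self _
      _ < |x| * Real.sqrt (-c - 6) := mul_lt_mul_of_pos_left hys hx0
  · rw [gt_iff_lt, div_lt_iff₀ hsq]
    calc (4:ℝ) < x * y := hxy
      _ ≤ |x| * |y| := by rw [← abs_mul]; exact le_abs_self _
      _ = |y| * |x| := mul_comm _ _
      _ < |y| * Real.sqrt (-c - 6) := mul_lt_mul_of_pos_left hxs hy0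
end

section
/- Let c < 2, |z₀| > 2, and let u₀ = (x₀,y₀,z₀) with κ(u₀) = c, and u₁ = Q_x(u₀) = (y₀z₀ - x₀, y₀, z₀). Define τ(x,y,z) = z(xy + z). Then |τ(u₁) - τ(u₀)| = |z₀|·|y₀|·|x₁ - x₀| ≥ |y₀z₀|·max(|y₀|√(z₀² - 4), 2√(z₀² - c - 2)). -/
theorem stmt14 (c x₀ y₀ z₀ : ℝ) (hc : c < 2) (hz : |z₀| > 2)
    (hk : κ x₀ y₀ z₀ = c) :
    |τ (y₀*z₀ - x₀) y₀ z₀ - τ x₀ y₀ z₀| = |z₀| * |y₀| * |(y₀*z₀ - x₀) - x₀| ∧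
    |τ (y₀*z₀ - x₀) y₀ z₀ - τ x₀ y₀ z₀| ≥
      |y₀*z₀| * max (|y₀| * Real.sqrt (z₀^2 - 4)) (2 * Real.sqrt (z₀^2 - c - 2)) := by
  simp only [κ] at hk
  have h4 : z₀^2 > 4 := by
    have h0 : (0:ℝ) ≤ |z₀| := abs_nonneg _
    nlinarith [sq_abs z₀]
  have heq : τ (y₀*z₀ - x₀) y₀ z₀ - τ x₀ y₀ z₀ = z₀ * y₀ * ((y₀*z₀ - x₀) - x₀) := by
    simp only [τ]; ring
  have h1 : |τ (y₀*z₀ - x₀) y₀ z₀ - τ x₀ y₀ z₀| = |z₀| * |y₀| * |(y₀*z₀ - x₀) - x₀| := by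
    rw [heq, abs_mul, abs_mul]
  refine ⟨h1, ?_⟩
  rw [h1, abs_mul]
  set d := (y₀*z₀ - x₀) - x₀ with hdD
  have hd : d^2 = y₀^2*(z₀^2-4) + 4*(z₀^2 - c - 2) := by
    rw [hdD]; linear_combination (-4 : ℝ) * hk
  have hmax : max (|y₀| * Real.sqrt (z₀^2 - 4)) (2 * Real.sqrt (z₀^2 - c - 2)) ≤ |d| := by
    apply max_le
    · have hle : y₀^2 * (z₀^2 - 4) ≤ d^2 := by nlinarith
      have := Real.sqrt_le_sqrt hle
      rwa [Real.sqrt_mul (sq_nonneg _), Real.sqrt_sq_eq_abs, Real.sqrt_sq_eq_abs] at this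
    · have hle : 4 * (z₀^2 - c - 2) ≤ d^2 := by nlinarith [sq_nonneg y₀]
      have := Real.sqrt_le_sqrt hle
      rwa [Real.sqrt_mul (by norm_num : (0:ℝ) ≤ 4), Real.sqrt_sq_eq_abs,
        (show Real.sqrt 4 = 2 by rw [show (4:ℝ) = 2^2 by norm_num, Real.sqrt_sq (by norm_num)])] at this
  calc |y₀| * |z₀| * max (|y₀| * Real.sqrt (z₀^2 - 4)) (2 * Real.sqrt (z₀^2 - c - 2))
      ≤ |y₀| * |z₀| * |d| := by
        gcongr
    _ = |z₀| * |y₀| * |d| := by ring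
end
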